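/- Let H be a complex Hilbert space, let A, B, C, D be Hilbert–Schmidt operators on H, and let 0 ≤ ν ≤ 1. Let T denote the block operator [[A, B],[C, D]] on H ⊕ H. Then w_{(2,ν)}(T)² ≤ w_{(2,ν)}(A)² + w_{(2,ν)}(D)² + ‖B‖₂² + ‖C‖₂². -/

import Mathlib

variable {H : Type*} [NormedAddCommGroup H] [InnerProductSpace ℂ H] [CompleteSpace H]

/-- The operator `ν e^{iθ} A + (1-ν) e^{-iθ} A*`. -/
noncomputable def weightedPart {E : Type*} [NormedAddCommGroup E] [InnerProductSpace ℂ E]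
    [CompleteSpace E] (ν θ : ℝ) (A : E →L[ℂ] E) : E →L[ℂ] E :=
  ((ν : ℂ) * Complex.exp (θ * Complex.I)) • A +
    (((1 - ν : ℝ) : ℂ) * Complex.exp (-(θ * Complex.I))) • ContinuousLinearMap.adjoint A

/-- The Hilbert–Schmidt norm `‖A‖₂ = √(∑ᵢ ‖A eᵢ‖²)` computed w.r.t. a Hilbert basis `e`. -/
noncomputable def hsNorm {E : Type*} [NormedAddCommGroup E] [InnerProductSpace ℂ E]
    {ι : Type*} (e : HilbertBasis ι ℂ E) (A : E →L[ℂ] E) : ℝ :=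
  Real.sqrt (∑' i, ‖A (e i)‖ ^ 2)

/-- The trace `tr(T) = ∑ᵢ ⟨eᵢ, T eᵢ⟩` computed w.r.t. a Hilbert basis `e`. -/
noncomputable def trBasis {E : Type*} [NormedAddCommGroup E] [InnerProductSpace ℂ E]
    {ι : Type*} (e : HilbertBasis ι ℂ E) (T : E →L[ℂ] E) : ℂ :=
  ∑' i, (inner ℂ (e i) (T (e i)) : ℂ)

/-- The weighted Hilbert–Schmidt numerical radius
`w_{(2,ν)}(A) = sup_{θ ∈ ℝ} ‖ν e^{iθ} A + (1-ν) e^{-iθ} A*‖₂`. -/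
noncomputable def wHS {E : Type*} [NormedAddCommGroup E] [InnerProductSpace ℂ E]
    [CompleteSpace E] {ι : Type*} (e : HilbertBasis ι ℂ E) (ν : ℝ) (A : E →L[ℂ] E) : ℝ :=
  ⨆ θ : ℝ, hsNorm e (weightedPart ν θ A)

/-- The block operator `[[X, Y],[Z, W]]` on the Hilbert space direct sum `H ⊕₂ H`,
mapping `(x, y)` to `(Xx + Yy, Zx + Wy)`. -/
noncomputable def blockOp (X Y Z W : H →L[ℂ] H) :
    WithLp 2 (H × H) →L[ℂ] WithLp 2 (H × H) :=
  ((WithLp.prodContinuousLinearEquiv 2 ℂ H H).symm.toContinuousLinearMap).comp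
    ((((X.comp (ContinuousLinearMap.fst ℂ H H)) + (Y.comp (ContinuousLinearMap.snd ℂ H H))).prod
      ((Z.comp (ContinuousLinearMap.fst ℂ H H)) + (W.comp (ContinuousLinearMap.snd ℂ H H)))).comp
      (WithLp.prodContinuousLinearEquiv 2 ℂ H H).toContinuousLinearMap)

/-!
For each `θ`, the weighted part `ν e^{iθ} T + (1-ν) e^{-iθ} T*` of `T = [[A, B], [C, D]]` is the
block operator whose diagonal entries are the weighted parts of `A` and `D` and whose off-diagonal
entries are `ν e^{iθ} B + (1-ν) e^{-iθ} C*` and `ν e^{iθ} C + (1-ν) e^{-iθ} B*`. The squared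
Hilbert–Schmidt norm of a block operator is the sum of those of its entries. Convexity of `‖·‖²`
and `‖X*‖₂ = ‖X‖₂` bound the two off-diagonal terms by
`ν ‖B‖₂² + (1-ν) ‖C‖₂² + ν ‖C‖₂² + (1-ν) ‖B‖₂² = ‖B‖₂² + ‖C‖₂²`,
and taking the supremum over `θ` gives the inequality.
-/

open ContinuousLinearMap
open scoped ENNReal InnerProductSpace

theorem enorm_sq_eq_ofReal {G : Type*} [SeminormedAddCommGroup G] (x : G) :
    ‖x‖ₑ ^ 2 = ENNReal.ofReal (‖x‖ ^ 2) := by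
  rw [ENNReal.ofReal_pow (norm_nonneg x), ofReal_norm]

theorem WithLp.prod_enorm_sq_eq_of_L2 {E F : Type*} [SeminormedAddCommGroup E]
    [SeminormedAddCommGroup F] (x : WithLp 2 (E × F)) :
    ‖x‖ₑ ^ 2 = ‖x.fst‖ₑ ^ 2 + ‖x.snd‖ₑ ^ 2 := by
  rw [enorm_sq_eq_ofReal, enorm_sq_eq_ofReal, enorm_sq_eq_ofReal, WithLp.prod_norm_sq_eq_of_L2,
    ENNReal.ofReal_add (sq_nonneg _) (sq_nonneg _)]

theorem enorm_add_enorm_le_one {G : Type*} [SeminormedAddCommGroup G] {a a' : G}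
    (h : ‖a‖ + ‖a'‖ ≤ 1) : ‖a‖ₑ + ‖a'‖ₑ ≤ 1 := by
  rw [← ofReal_norm, ← ofReal_norm, ← ENNReal.ofReal_add (norm_nonneg _) (norm_nonneg _)]
  exact ENNReal.ofReal_le_one.mpr h

theorem Real.iSup_sq_le {ι : Type*} [Nonempty ι] {f : ι → ℝ} (hf : ∀ i, 0 ≤ f i) {R : ℝ}
    (h : ∀ i, f i ^ 2 ≤ R) : (⨆ i, f i) ^ 2 ≤ R :=
  have hR : 0 ≤ R := (sq_nonneg _).trans (h (Classical.arbitrary ι))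
  (Real.le_sqrt (Real.iSup_nonneg hf) hR).mp (ciSup_le fun i => Real.le_sqrt_of_sq_le (h i))

section HilbertSchmidt

variable {𝕜 E F ι κ : Type*} [RCLike 𝕜] [NormedAddCommGroup E] [InnerProductSpace 𝕜 E]
  [NormedAddCommGroup F] [InnerProductSpace 𝕜 F]

theorem HilbertBasis.hasSum_norm_inner_sq (b : HilbertBasis ι 𝕜 E) (x : E) :
    HasSum (fun i => ‖⟪b i, x⟫_𝕜‖ ^ 2) (‖x‖ ^ 2) := by
  have h := b.hasSum_inner_mul_inner x x
  rw [inner_self_eq_norm_sq_to_K] at h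
  refine (RCLike.hasSum_ofReal 𝕜).mp ?_
  push_cast
  refine h.congr_fun fun i => ?_
  rw [← inner_conj_symm (b i) x, RCLike.norm_conj, RCLike.mul_conj]

theorem HilbertBasis.tsum_enorm_inner_sq (b : HilbertBasis ι 𝕜 E) (x : E) :
    ∑' i, ‖⟪b i, x⟫_𝕜‖ₑ ^ 2 = ‖x‖ₑ ^ 2 := by
  have h := b.hasSum_norm_inner_sq x
  simp only [enorm_sq_eq_ofReal]
  rw [← ENNReal.ofReal_tsum_of_nonneg (fun i => sq_nonneg _) h.summable, h.tsum_eq]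

theorem norm_smul_add_smul_sq_le {a a' : 𝕜} (h : ‖a‖ + ‖a'‖ ≤ 1) (u v : E) :
    ‖a • u + a' • v‖ ^ 2 ≤ ‖a‖ * ‖u‖ ^ 2 + ‖a'‖ * ‖v‖ ^ 2 := by
  have htri : ‖a • u + a' • v‖ ≤ ‖a‖ * ‖u‖ + ‖a'‖ * ‖v‖ :=
    (norm_add_le _ _).trans_eq (by rw [norm_smul, norm_smul])
  -- Cauchy–Schwarz: `(p s + q t)² ≤ (p + q) (p s² + q t²)`, and `p + q ≤ 1`.
  nlinarith [pow_le_pow_left₀ (norm_nonneg _) htri 2, norm_nonneg a, norm_nonneg a',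
    mul_nonneg (mul_nonneg (norm_nonneg a) (norm_nonneg a')) (sq_nonneg (‖u‖ - ‖v‖)),
    mul_nonneg (norm_nonneg a) (sq_nonneg ‖u‖), mul_nonneg (norm_nonneg a') (sq_nonneg ‖v‖)]

/-- Valued in `ℝ≥0∞`, so that sums may be rearranged freely; it is `∞` on operators that are not
Hilbert–Schmidt. -/
noncomputable def hsENormSq (b : HilbertBasis ι 𝕜 E) (S : E →L[𝕜] F) : ℝ≥0∞ :=
  ∑' i, ‖S (b i)‖ₑ ^ 2

theorem hsENormSq_adjoint [CompleteSpace E] [CompleteSpace F] (b : HilbertBasis ι 𝕜 E)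
    (c : HilbertBasis κ 𝕜 F) (S : E →L[𝕜] F) : hsENormSq c (adjoint S) = hsENormSq b S :=
  calc ∑' j, ‖adjoint S (c j)‖ₑ ^ 2
      = ∑' j, ∑' i, ‖⟪c j, S (b i)⟫_𝕜‖ₑ ^ 2 := by
        refine tsum_congr fun j => ?_
        rw [← b.tsum_enorm_inner_sq]
        refine tsum_congr fun i => ?_
        rw [adjoint_inner_right, ← inner_conj_symm, RCLike.enorm_conj]
    _ = ∑' i, ∑' j, ‖⟪c j, S (b i)⟫_𝕜‖ₑ ^ 2 := ENNReal.tsum_comm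
    _ = ∑' i, ‖S (b i)‖ₑ ^ 2 := tsum_congr fun i => c.tsum_enorm_inner_sq _

theorem hsENormSq_smul_add_smul_le (b : HilbertBasis ι 𝕜 E) {a a' : 𝕜} (h : ‖a‖ + ‖a'‖ ≤ 1)
    (X Y : E →L[𝕜] F) :
    hsENormSq b (a • X + a' • Y) ≤ ‖a‖ₑ * hsENormSq b X + ‖a'‖ₑ * hsENormSq b Y := by
  unfold hsENormSq
  rw [← ENNReal.tsum_mul_left, ← ENNReal.tsum_mul_left, ← ENNReal.tsum_add]
  refine ENNReal.tsum_le_tsum fun i => ?_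
  rw [add_apply, smul_apply, smul_apply, enorm_sq_eq_ofReal, enorm_sq_eq_ofReal,
    enorm_sq_eq_ofReal, ← ofReal_norm a, ← ofReal_norm a', ← ENNReal.ofReal_mul (norm_nonneg _),
    ← ENNReal.ofReal_mul (norm_nonneg _), ← ENNReal.ofReal_add (by positivity) (by positivity)]
  exact ENNReal.ofReal_le_ofReal (norm_smul_add_smul_sq_le h _ _)

variable [CompleteSpace E] {a a' : 𝕜}

theorem hsENormSq_smul_add_smul_adjoint_le (b : HilbertBasis ι 𝕜 E) (h : ‖a‖ + ‖a'‖ ≤ 1)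
    (X Y : E →L[𝕜] E) :
    hsENormSq b (a • X + a' • adjoint Y) ≤ ‖a‖ₑ * hsENormSq b X + ‖a'‖ₑ * hsENormSq b Y := by
  simpa only [hsENormSq_adjoint b b] using hsENormSq_smul_add_smul_le b h X (adjoint Y)

theorem hsENormSq_smul_add_smul_adjoint_self_le (b : HilbertBasis ι 𝕜 E) (h : ‖a‖ + ‖a'‖ ≤ 1)
    (X : E →L[𝕜] E) : hsENormSq b (a • X + a' • adjoint X) ≤ hsENormSq b X :=
  calc hsENormSq b (a • X + a' • adjoint X)
      ≤ (‖a‖ₑ + ‖a'‖ₑ) * hsENormSq b X := by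
        rw [add_mul]; exact hsENormSq_smul_add_smul_adjoint_le b h X X
    _ ≤ hsENormSq b X := mul_le_of_le_one_left' (enorm_add_enorm_le_one h)

theorem hsENormSq_smul_add_smul_adjoint_swap_le (b : HilbertBasis ι 𝕜 E) (h : ‖a‖ + ‖a'‖ ≤ 1)
    (X Y : E →L[𝕜] E) :
    hsENormSq b (a • X + a' • adjoint Y) + hsENormSq b (a • Y + a' • adjoint X) ≤
      hsENormSq b X + hsENormSq b Y :=
  calc hsENormSq b (a • X + a' • adjoint Y) + hsENormSq b (a • Y + a' • adjoint X)
      ≤ ‖a‖ₑ * hsENormSq b X + ‖a'‖ₑ * hsENormSq b Y +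
          (‖a‖ₑ * hsENormSq b Y + ‖a'‖ₑ * hsENormSq b X) :=
        add_le_add (hsENormSq_smul_add_smul_adjoint_le b h X Y)
          (hsENormSq_smul_add_smul_adjoint_le b h Y X)
    _ = (‖a‖ₑ + ‖a'‖ₑ) * (hsENormSq b X + hsENormSq b Y) := by ring
    _ ≤ hsENormSq b X + hsENormSq b Y := mul_le_of_le_one_left' (enorm_add_enorm_le_one h)

end HilbertSchmidt

section WeightedPart

variable {E ι : Type*} [NormedAddCommGroup E] [InnerProductSpace ℂ E]

theorem hsNorm_eq_sqrt_toReal (b : HilbertBasis ι ℂ E) (S : E →L[ℂ] E) :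
    hsNorm b S = √(hsENormSq b S).toReal := by
  rw [hsNorm, hsENormSq, ENNReal.tsum_toReal_eq fun i => by simp]
  simp only [ENNReal.toReal_pow, toReal_enorm]

theorem hsNorm_nonneg (b : HilbertBasis ι ℂ E) (S : E →L[ℂ] E) : 0 ≤ hsNorm b S :=
  Real.sqrt_nonneg _

theorem hsENormSq_ne_top {b : HilbertBasis ι ℂ E} {S : E →L[ℂ] E}
    (h : Summable fun i => ‖S (b i)‖ ^ 2) : hsENormSq b S ≠ ⊤ := by
  simp only [hsENormSq, enorm_sq_eq_ofReal]
  rw [← ENNReal.ofReal_tsum_of_nonneg (fun i => sq_nonneg _) h]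
  exact ENNReal.ofReal_ne_top

theorem hsENormSq_eq_ofReal_hsNorm_sq {b : HilbertBasis ι ℂ E} {S : E →L[ℂ] E}
    (h : hsENormSq b S ≠ ⊤) : hsENormSq b S = ENNReal.ofReal (hsNorm b S ^ 2) := by
  rw [hsNorm_eq_sqrt_toReal, Real.sq_sqrt ENNReal.toReal_nonneg, ENNReal.ofReal_toReal h]

variable {ν : ℝ}

theorem norm_add_norm_weightedPart_coeffs (hν₀ : 0 ≤ ν) (hν₁ : ν ≤ 1) (θ : ℝ) :
    ‖(ν : ℂ) * Complex.exp (θ * Complex.I)‖ +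
      ‖((1 - ν : ℝ) : ℂ) * Complex.exp (-(θ * Complex.I))‖ = 1 := by
  rw [norm_mul, norm_mul, Complex.norm_real, Complex.norm_real, Real.norm_of_nonneg hν₀,
    Real.norm_of_nonneg (sub_nonneg.mpr hν₁)]
  simp [Complex.norm_exp]

variable [CompleteSpace E]

theorem hsENormSq_weightedPart_le (b : HilbertBasis ι ℂ E) (hν₀ : 0 ≤ ν) (hν₁ : ν ≤ 1) (θ : ℝ)
    (X : E →L[ℂ] E) : hsENormSq b (weightedPart ν θ X) ≤ hsENormSq b X :=
  hsENormSq_smul_add_smul_adjoint_self_le b (norm_add_norm_weightedPart_coeffs hν₀ hν₁ θ).le X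

theorem hsNorm_weightedPart_le_wHS {b : HilbertBasis ι ℂ E} {X : E →L[ℂ] E}
    (hX : Summable fun i => ‖X (b i)‖ ^ 2) (hν₀ : 0 ≤ ν) (hν₁ : ν ≤ 1) (θ : ℝ) :
    hsNorm b (weightedPart ν θ X) ≤ wHS b ν X := by
  have hle : ∀ θ, hsNorm b (weightedPart ν θ X) ≤ hsNorm b X := fun θ => by
    rw [hsNorm_eq_sqrt_toReal, hsNorm_eq_sqrt_toReal]
    exact Real.sqrt_le_sqrt
      (ENNReal.toReal_mono (hsENormSq_ne_top hX) (hsENormSq_weightedPart_le b hν₀ hν₁ θ X))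
  exact le_ciSup ⟨hsNorm b X, Set.forall_mem_range.mpr hle⟩ θ

end WeightedPart

section BlockOperator

variable {V : Type*} [NormedAddCommGroup V] [InnerProductSpace ℂ V]

noncomputable def rowOp (X Y : V →L[ℂ] V) : WithLp 2 (V × V) →L[ℂ] V :=
  (X.comp (fst ℂ V V) + Y.comp (snd ℂ V V)).comp
    (WithLp.prodContinuousLinearEquiv 2 ℂ V V).toContinuousLinearMap

theorem rowOp_apply (X Y : V →L[ℂ] V) (v : WithLp 2 (V × V)) :
    rowOp X Y v = X v.fst + Y v.snd := rfl

theorem blockOp_apply (X Y Z W : V →L[ℂ] V) (v : WithLp 2 (V × V)) :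
    blockOp X Y Z W v = WithLp.toLp 2 (rowOp X Y v, rowOp Z W v) := rfl

theorem smul_blockOp (c : ℂ) (X Y Z W : V →L[ℂ] V) :
    c • blockOp X Y Z W = blockOp (c • X) (c • Y) (c • Z) (c • W) := by
  ext v : 1
  simp only [smul_apply, blockOp_apply, rowOp_apply, ← WithLp.toLp_smul, Prod.smul_mk, smul_add]

theorem blockOp_add_blockOp (X Y Z W X' Y' Z' W' : V →L[ℂ] V) :
    blockOp X Y Z W + blockOp X' Y' Z' W' = blockOp (X + X') (Y + Y') (Z + Z') (W + W') := by
  ext v : 1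
  simp only [add_apply, blockOp_apply, rowOp_apply, ← WithLp.toLp_add, Prod.mk_add_mk]
  congr 2 <;> abel

variable [CompleteSpace V] {ι κ : Type*}

theorem adjoint_rowOp_apply (X Y : V →L[ℂ] V) (x : V) :
    adjoint (rowOp X Y) x = WithLp.toLp 2 (adjoint X x, adjoint Y x) := by
  refine ext_inner_right ℂ fun v => ?_
  rw [adjoint_inner_left, WithLp.prod_inner_apply, rowOp_apply, inner_add_right,
    adjoint_inner_left, adjoint_inner_left]
  rfl

theorem hsENormSq_rowOp (e : HilbertBasis ι ℂ V) (f : HilbertBasis κ ℂ (WithLp 2 (V × V)))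
    (X Y : V →L[ℂ] V) : hsENormSq f (rowOp X Y) = hsENormSq e X + hsENormSq e Y := by
  rw [← hsENormSq_adjoint f e, ← hsENormSq_adjoint e e X, ← hsENormSq_adjoint e e Y,
    hsENormSq, hsENormSq, hsENormSq, ← ENNReal.tsum_add]
  refine tsum_congr fun i => ?_
  rw [adjoint_rowOp_apply, WithLp.prod_enorm_sq_eq_of_L2]
  rfl

theorem hsENormSq_blockOp (e : HilbertBasis ι ℂ V) (f : HilbertBasis κ ℂ (WithLp 2 (V × V)))
    (X Y Z W : V →L[ℂ] V) :
    hsENormSq f (blockOp X Y Z W) =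
      hsENormSq e X + hsENormSq e Y + hsENormSq e Z + hsENormSq e W := by
  have hrows :
      hsENormSq f (blockOp X Y Z W) = hsENormSq f (rowOp X Y) + hsENormSq f (rowOp Z W) := by
    rw [hsENormSq, hsENormSq, hsENormSq, ← ENNReal.tsum_add]
    exact tsum_congr fun k => WithLp.prod_enorm_sq_eq_of_L2 _
  rw [hrows, hsENormSq_rowOp e, hsENormSq_rowOp e, ← add_assoc]

theorem adjoint_blockOp (X Y Z W : V →L[ℂ] V) :
    adjoint (blockOp X Y Z W) = blockOp (adjoint X) (adjoint Z) (adjoint Y) (adjoint W) := by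
  refine ((eq_adjoint_iff _ _).mpr fun v w => ?_).symm
  simp only [blockOp_apply, rowOp_apply, WithLp.prod_inner_apply, inner_add_left,
    inner_add_right, adjoint_inner_left, WithLp.ofLp_fst, WithLp.ofLp_snd]
  ring

theorem hsENormSq_smul_add_smul_adjoint_blockOp_le (e : HilbertBasis ι ℂ V)
    (f : HilbertBasis κ ℂ (WithLp 2 (V × V))) {a a' : ℂ} (h : ‖a‖ + ‖a'‖ ≤ 1)
    (A B C D : V →L[ℂ] V) :
    hsENormSq f (a • blockOp A B C D + a' • adjoint (blockOp A B C D)) ≤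
      hsENormSq e (a • A + a' • adjoint A) + hsENormSq e (a • D + a' • adjoint D) +
        hsENormSq e B + hsENormSq e C := by
  rw [adjoint_blockOp, smul_blockOp, smul_blockOp, blockOp_add_blockOp, hsENormSq_blockOp e f]
  have hoff := hsENormSq_smul_add_smul_adjoint_swap_le e h B C
  calc _ = hsENormSq e (a • A + a' • adjoint A) + hsENormSq e (a • D + a' • adjoint D) +
        (hsENormSq e (a • B + a' • adjoint C) + hsENormSq e (a • C + a' • adjoint B)) := by ring
    _ ≤ _ := by rw [add_assoc _ (hsENormSq e B)]; exact add_le_add le_rfl hoff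

theorem hsNorm_sq_weightedPart_blockOp_le {e : HilbertBasis ι ℂ V} {A B C D : V →L[ℂ] V}
    {ν : ℝ} (f : HilbertBasis κ ℂ (WithLp 2 (V × V)))
    (hA : Summable fun i => ‖A (e i)‖ ^ 2) (hB : Summable fun i => ‖B (e i)‖ ^ 2)
    (hC : Summable fun i => ‖C (e i)‖ ^ 2) (hD : Summable fun i => ‖D (e i)‖ ^ 2)
    (hν₀ : 0 ≤ ν) (hν₁ : ν ≤ 1) (θ : ℝ) :
    hsNorm f (weightedPart ν θ (blockOp A B C D)) ^ 2 ≤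
      hsNorm e (weightedPart ν θ A) ^ 2 + hsNorm e (weightedPart ν θ D) ^ 2 +
        hsNorm e B ^ 2 + hsNorm e C ^ 2 := by
  have hwA := ne_top_of_le_ne_top (hsENormSq_ne_top hA) (hsENormSq_weightedPart_le e hν₀ hν₁ θ A)
  have hwD := ne_top_of_le_ne_top (hsENormSq_ne_top hD) (hsENormSq_weightedPart_le e hν₀ hν₁ θ D)
  rw [hsNorm_eq_sqrt_toReal f, Real.sq_sqrt ENNReal.toReal_nonneg]
  refine ENNReal.toReal_le_of_le_ofReal (by positivity) ?_
  calc hsENormSq f (weightedPart ν θ (blockOp A B C D))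
      ≤ hsENormSq e (weightedPart ν θ A) + hsENormSq e (weightedPart ν θ D) +
          hsENormSq e B + hsENormSq e C :=
        hsENormSq_smul_add_smul_adjoint_blockOp_le e f
          (norm_add_norm_weightedPart_coeffs hν₀ hν₁ θ).le A B C D
    _ = _ := by
        rw [hsENormSq_eq_ofReal_hsNorm_sq hwA, hsENormSq_eq_ofReal_hsNorm_sq hwD,
          hsENormSq_eq_ofReal_hsNorm_sq (hsENormSq_ne_top hB),
          hsENormSq_eq_ofReal_hsNorm_sq (hsENormSq_ne_top hC), ← ENNReal.ofReal_add,
          ← ENNReal.ofReal_add, ← ENNReal.ofReal_add] <;> positivity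

end BlockOperator

theorem stmt17 {ι κ : Type*} (e : HilbertBasis ι ℂ H)
    (f : HilbertBasis κ ℂ (WithLp 2 (H × H)))
    (A B C D : H →L[ℂ] H)
    (hA : Summable fun i => ‖A (e i)‖ ^ 2) (hB : Summable fun i => ‖B (e i)‖ ^ 2)
    (hC : Summable fun i => ‖C (e i)‖ ^ 2) (hD : Summable fun i => ‖D (e i)‖ ^ 2)
    (ν : ℝ) (hν₀ : 0 ≤ ν) (hν₁ : ν ≤ 1) :
    (wHS f ν (blockOp A B C D)) ^ 2 ≤
      (wHS e ν A) ^ 2 + (wHS e ν D) ^ 2 + (hsNorm e B) ^ 2 + (hsNorm e C) ^ 2 := by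
  refine Real.iSup_sq_le (fun θ => hsNorm_nonneg f _) fun θ => ?_
  have hAθ := hsNorm_weightedPart_le_wHS hA hν₀ hν₁ θ
  have hDθ := hsNorm_weightedPart_le_wHS hD hν₀ hν₁ θ
  calc hsNorm f (weightedPart ν θ (blockOp A B C D)) ^ 2
      ≤ hsNorm e (weightedPart ν θ A) ^ 2 + hsNorm e (weightedPart ν θ D) ^ 2 +
          hsNorm e B ^ 2 + hsNorm e C ^ 2 :=
        hsNorm_sq_weightedPart_blockOp_le f hA hB hC hD hν₀ hν₁ θ
    _ ≤ _ := by gcongr <;> exact hsNorm_nonneg _ _
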